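/- Let p(·) be a measurable exponent with 0 < p₋ ≤ p₊ < ∞ on a probability space, 0 < q ≤ ∞, and b a slowly varying function. Then there is a constant C such that for all measurable f, g: ‖f + g‖_{p(·),q,b} ≤ C(‖f‖_{p(·),q,b} + ‖g‖_{p(·),q,b}). -/

import Mathlib

open MeasureTheory Set ENNReal Filter Topology

noncomputable section

/-- A measurable function `b : [1,∞) → (0,∞)` is slowly varying if for every `ε > 0`,
`t ^ ε * b t` is equivalent (up to multiplicative constants) to a nondecreasing function
and `t ^ (-ε) * b t` is equivalent to a nonincreasing function on `[1,∞)`. -/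
def SlowlyVarying (b : ℝ → ℝ) : Prop :=
  (∀ t : ℝ, 1 ≤ t → 0 < b t) ∧
  ∀ ε : ℝ, 0 < ε →
    ((∃ g : ℝ → ℝ, MonotoneOn g (Set.Ici 1) ∧ ∃ c > (0:ℝ), ∃ C > (0:ℝ),
        ∀ t : ℝ, 1 ≤ t → c * g t ≤ t ^ ε * b t ∧ t ^ ε * b t ≤ C * g t) ∧
     (∃ g : ℝ → ℝ, AntitoneOn g (Set.Ici 1) ∧ ∃ c > (0:ℝ), ∃ C > (0:ℝ),
        ∀ t : ℝ, 1 ≤ t → c * g t ≤ t ^ (-ε) * b t ∧ t ^ (-ε) * b t ≤ C * g t))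

/-- `γ_b(t) = b (max {t, t⁻¹})` for `t > 0`. -/
def gammaB (b : ℝ → ℝ) (t : ℝ) : ℝ := b (max t t⁻¹)

variable {Ω : Type*} [MeasurableSpace Ω]

/-- The variable Lebesgue quasi-norm
`‖f‖_{p(·)} = inf {λ > 0 : ∫ (|f|/λ)^{p(·)} dμ ≤ 1}`. -/
def vLpNorm (μ : Measure Ω) (p : Ω → ℝ) (f : Ω → ℝ) : ℝ :=
  sInf {lam : ℝ | 0 < lam ∧ ∫⁻ ω, ENNReal.ofReal ((|f ω| / lam) ^ p ω) ∂μ ≤ 1}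

/-- `f ∈ L_{p(·)}` : the modular is finite for some `λ > 0`. -/
def MemVLp (μ : Measure Ω) (p : Ω → ℝ) (f : Ω → ℝ) : Prop :=
  ∃ lam > (0:ℝ), ∫⁻ ω, ENNReal.ofReal ((|f ω| / lam) ^ p ω) ∂μ ≤ 1

/-- `‖χ_A‖_{p(·)}`. -/
def chiNorm (μ : Measure Ω) (p : Ω → ℝ) (A : Set Ω) : ℝ :=
  vLpNorm μ p (A.indicator 1)

/-- The variable Lorentz–Karamata quasi-norm `‖f‖_{p(·),q,b}` (with `q ∈ (0,∞]`). -/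
def vLKNorm (μ : Measure Ω) (p : Ω → ℝ) (q : ℝ≥0∞) (b : ℝ → ℝ) (f : Ω → ℝ) : ℝ≥0∞ :=
  if q = ∞ then
    ⨆ t ∈ Set.Ioi (0:ℝ), ENNReal.ofReal
      (t * chiNorm μ p {ω | t < |f ω|} * gammaB b (chiNorm μ p {ω | t < |f ω|}))
  else
    (∫⁻ t in Set.Ioi (0:ℝ), ENNReal.ofReal
      ((t * chiNorm μ p {ω | t < |f ω|} * gammaB b (chiNorm μ p {ω | t < |f ω|})) ^ q.toReal / t))
      ^ (1 / q.toReal)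

/-!
If `E ⊆ A ∪ B` then `‖χ_E‖_{p(·)} ≤ 2^{1/p₋} max (‖χ_A‖_{p(·)}, ‖χ_B‖_{p(·)})`, because at
`λ = 2^{1/p₋} max (λ_A, λ_B)` the modular of `χ_E` is at most half the sum of the modulars of
`χ_A` and `χ_B`. Applied to `{|f + g| > t} ⊆ {|f| > t/2} ∪ {|g| > t/2}`, this bounds the
level-set norm of `f + g` at `t` by a fixed dilate of those of `f` and `g` at `t/2`. On `(0, 1]`,
`x γ_b(x)` is `s⁻¹ b(s)` at `s = 1/x`, and slow variation (both comparison functions, at `ε = 1`)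
makes it change only by a bounded factor under bounded dilations. As `dt/t` is dilation
invariant, the quasi-triangle inequality of `L^q(dt/t)` concludes. Since `b` is not assumed
measurable, `x γ_b(x)` is first replaced by the comparable monotone function `k(1/x)`, with `k`
the nonincreasing function equivalent to `t⁻¹ b(t)`; this makes the integrands measurable.
-/

theorem gammaB_of_le_one {b : ℝ → ℝ} {x : ℝ} (hx : 0 < x) (hx1 : x ≤ 1) :
    gammaB b x = b x⁻¹ := by
  rw [gammaB, max_eq_right (hx1.trans ((one_le_inv₀ hx).2 hx1))]

theorem SlowlyVarying.exists_antitoneOn_inv_mul {b : ℝ → ℝ} (hb : SlowlyVarying b) :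
    ∃ k : ℝ → ℝ, AntitoneOn k (Ici 1) ∧ ∃ c > (0:ℝ), ∃ C > (0:ℝ),
      ∀ t, 1 ≤ t → c * k t ≤ t⁻¹ * b t ∧ t⁻¹ * b t ≤ C * k t := by
  obtain ⟨k, hk, c, hc, C, hC, hkb⟩ := (hb.2 1 one_pos).2
  exact ⟨k, hk, c, hc, C, hC, fun t ht => Real.rpow_neg_one t ▸ hkb t ht⟩

theorem SlowlyVarying.exists_monotoneOn_mul {b : ℝ → ℝ} (hb : SlowlyVarying b) :
    ∃ g : ℝ → ℝ, MonotoneOn g (Ici 1) ∧ ∃ c > (0:ℝ), ∃ C > (0:ℝ),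
      ∀ t, 1 ≤ t → c * g t ≤ t * b t ∧ t * b t ≤ C * g t := by
  obtain ⟨g, hg, c, hc, C, hC, hgb⟩ := (hb.2 1 one_pos).1
  exact ⟨g, hg, c, hc, C, hC, fun t ht => by simpa only [Real.rpow_one] using hgb t ht⟩

theorem SlowlyVarying.exists_inv_mul_le_of_le_mul {b : ℝ → ℝ} (hb : SlowlyVarying b) (D : ℝ) :
    ∃ K > (0:ℝ), ∀ s u, 1 ≤ s → 1 ≤ u → u ≤ D * s → s⁻¹ * b s ≤ K * (u⁻¹ * b u) := by
  obtain ⟨k, hk, c, hc, C, hC, hkb⟩ := hb.exists_antitoneOn_inv_mul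
  obtain ⟨g, hg, c', hc', C', hC', hgb⟩ := hb.exists_monotoneOn_mul
  refine ⟨max (C / c) (C' * D ^ 2 / c'), lt_max_of_lt_left (by positivity),
    fun s u hs hu hus => ?_⟩
  have hs0 : 0 < s := one_pos.trans_le hs
  have hu0 : 0 < u := one_pos.trans_le hu
  have hbu : 0 < u⁻¹ * b u := mul_pos (inv_pos.2 hu0) (hb.1 u hu)
  -- For `u ≤ s` the nonincreasing comparison function of `t⁻¹ b t` suffices; for `s < u ≤ D s`
  -- the nondecreasing one of `t b t` is used, at the cost of `(u / s)² ≤ D²`.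
  rcases le_total u s with hle | hle
  · calc s⁻¹ * b s ≤ C * k s := (hkb s hs).2
      _ ≤ C * k u := by gcongr; exact hk hu hs hle
      _ = C / c * (c * k u) := by field_simp
      _ ≤ C / c * (u⁻¹ * b u) := mul_le_mul_of_nonneg_left (hkb u hu).1 (by positivity)
      _ ≤ _ := by gcongr; exact le_max_left _ _
  · have hmono : s * b s ≤ C' / c' * (u * b u) :=
      calc s * b s ≤ C' * g s := (hgb s hs).2
        _ ≤ C' * g u := by gcongr; exact hg hs hu hle
        _ = C' / c' * (c' * g u) := by field_simp
        _ ≤ C' / c' * (u * b u) := mul_le_mul_of_nonneg_left (hgb u hu).1 (by positivity)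
    have hratio : u / s ≤ D := (div_le_iff₀ hs0).2 hus
    calc s⁻¹ * b s = s * b s / s ^ 2 := by field_simp
      _ ≤ C' / c' * (u * b u) / s ^ 2 := by gcongr
      _ = C' / c' * (u / s) ^ 2 * (u⁻¹ * b u) := by field_simp
      _ ≤ C' / c' * D ^ 2 * (u⁻¹ * b u) := by gcongr
      _ ≤ _ := by rw [mul_div_right_comm]; gcongr; exact le_max_right _ _

theorem SlowlyVarying.exists_antitoneOn_majorant {b : ℝ → ℝ} (hb : SlowlyVarying b) (D : ℝ) :
    ∃ κ : ℝ → ℝ, AntitoneOn κ (Ici 1) ∧ (∀ u, 1 ≤ u → 0 < κ u) ∧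
      ∃ c > (0:ℝ), ∀ s, 1 ≤ s → c * κ s ≤ s⁻¹ * b s ∧
        ∀ u, 1 ≤ u → u ≤ D * s → s⁻¹ * b s ≤ κ u := by
  obtain ⟨K, hK, hKb⟩ := hb.exists_inv_mul_le_of_le_mul D
  obtain ⟨k, hk, c, hc, C, hC, hkb⟩ := hb.exists_antitoneOn_inv_mul
  have hk0 : ∀ t, 1 ≤ t → 0 < k t := fun t ht => by
    have := (hkb t ht).2
    have : 0 < t⁻¹ * b t := mul_pos (inv_pos.2 (one_pos.trans_le ht)) (hb.1 t ht)
    nlinarith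
  refine ⟨fun u => K * C * k u,
    fun s hs u hu hsu => mul_le_mul_of_nonneg_left (hk hs hu hsu) (by positivity),
    fun u hu => by have := hk0 u hu; positivity, c / (K * C), by positivity,
    fun s hs => ⟨?_, fun u hu hus => ?_⟩⟩
  · calc c / (K * C) * (K * C * k s) = c * k s := by field_simp
      _ ≤ s⁻¹ * b s := (hkb s hs).1
  · calc s⁻¹ * b s ≤ K * (u⁻¹ * b u) := hKb s u hs hu hus
      _ ≤ K * (C * k u) := mul_le_mul_of_nonneg_left (hkb u hu).2 hK.le
      _ = K * C * k u := by ring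

theorem SlowlyVarying.exists_monotoneOn_majorant {b : ℝ → ℝ} (hb : SlowlyVarying b) (D : ℝ) :
    ∃ ψ : ℝ → ℝ, MonotoneOn ψ (Icc 0 1) ∧ (∀ y ∈ Icc (0:ℝ) 1, 0 ≤ ψ y) ∧
      ∃ c > (0:ℝ), ∀ x ∈ Icc (0:ℝ) 1, c * ψ x ≤ x * gammaB b x ∧
        ∀ y ∈ Icc (0:ℝ) 1, x ≤ D * y → x * gammaB b x ≤ ψ y := by
  obtain ⟨κ, hκ, hκ0, c, hc, hκb⟩ := hb.exists_antitoneOn_majorant D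
  have hinv : ∀ x ∈ Icc (0:ℝ) 1, 0 < x → 1 ≤ x⁻¹ := fun x hx hx0 => (one_le_inv₀ hx0).2 hx.2
  have hφ : ∀ x ∈ Icc (0:ℝ) 1, 0 < x → x * gammaB b x = (x⁻¹)⁻¹ * b x⁻¹ := fun x hx hx0 => by
    rw [gammaB_of_le_one hx0 hx.2, inv_inv]
  set ψ : ℝ → ℝ := fun y => if y = 0 then 0 else κ y⁻¹ with hψ
  have hψpos : ∀ y, 0 < y → ψ y = κ y⁻¹ := fun y hy => if_neg hy.ne'
  have hψ0 : ∀ y ∈ Icc (0:ℝ) 1, 0 ≤ ψ y := fun y hy => by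
    rcases hy.1.eq_or_lt with rfl | hy0
    · simp [hψ]
    · exact (hψpos y hy0).symm ▸ (hκ0 _ (hinv y hy hy0)).le
  refine ⟨ψ, fun x hx y hy hxy => ?_, hψ0, c, hc, fun x hx => ⟨?_, fun y hy hxy => ?_⟩⟩
  · rcases hx.1.eq_or_lt with rfl | hx0
    · simpa [hψ] using hψ0 y hy
    rw [hψpos x hx0, hψpos y (hx0.trans_le hxy)]
    exact hκ (hinv y hy (hx0.trans_le hxy)) (hinv x hx hx0) (inv_anti₀ hx0 hxy)
  · rcases hx.1.eq_or_lt with rfl | hx0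
    · simp [hψ]
    rw [hψpos x hx0, hφ x hx hx0]
    exact (hκb _ (hinv x hx hx0)).1
  · rcases hx.1.eq_or_lt with rfl | hx0
    · simpa using hψ0 y hy
    have hy0 : 0 < y := hy.1.lt_of_ne (by rintro rfl; simp at hxy; linarith)
    have hyx : y⁻¹ ≤ D * x⁻¹ := by
      rw [← div_eq_mul_inv, le_div_iff₀ hx0, ← div_eq_inv_mul, div_le_iff₀ hy0]
      linarith
    rw [hφ x hx hx0, hψpos y hy0]
    exact (hκb _ (hinv x hx hx0)).2 _ (hinv y hy hy0) hyx

def vModular (μ : Measure Ω) (p : Ω → ℝ) (f : Ω → ℝ) (lam : ℝ) : ℝ≥0∞ :=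
  ∫⁻ ω, ENNReal.ofReal ((|f ω| / lam) ^ p ω) ∂μ

section VariableLebesgue

variable {μ : Measure Ω} {p : Ω → ℝ}

theorem vLpNorm_nonneg (f : Ω → ℝ) : 0 ≤ vLpNorm μ p f :=
  Real.sInf_nonneg fun _ h => h.1.le

theorem vLpNorm_le {f : Ω → ℝ} {lam : ℝ} (hlam : 0 < lam) (h : vModular μ p f lam ≤ 1) :
    vLpNorm μ p f ≤ lam :=
  csInf_le ⟨0, fun _ h => h.1.le⟩ ⟨hlam, h⟩

theorem vModular_mono (hp0 : ∀ᵐ ω ∂μ, 0 ≤ p ω) {f g : Ω → ℝ} (hfg : ∀ ω, |f ω| ≤ |g ω|)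
    {lam lam' : ℝ} (hlam : 0 < lam) (hle : lam ≤ lam') :
    vModular μ p f lam' ≤ vModular μ p g lam :=
  lintegral_mono_ae <| hp0.mono fun ω hω => ENNReal.ofReal_le_ofReal <|
    Real.rpow_le_rpow (div_nonneg (abs_nonneg _) (hlam.trans_le hle).le)
      (div_le_div₀ (abs_nonneg _) (hfg ω) hlam hle) hω

theorem vModular_le_one_of_vLpNorm_lt (hp0 : ∀ᵐ ω ∂μ, 0 ≤ p ω) {f : Ω → ℝ}
    (hf : MemVLp μ p f) {lam : ℝ} (h : vLpNorm μ p f < lam) : vModular μ p f lam ≤ 1 := by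
  obtain ⟨lam', ⟨hlam', hmod⟩, hlt⟩ := exists_lt_of_csInf_lt hf h
  exact (vModular_mono hp0 (fun _ => le_rfl) hlam' hlt.le).trans hmod

theorem vLpNorm_mono (hp0 : ∀ᵐ ω ∂μ, 0 ≤ p ω) {f g : Ω → ℝ} (hg : MemVLp μ p g)
    (hfg : ∀ ω, |f ω| ≤ |g ω|) : vLpNorm μ p f ≤ vLpNorm μ p g :=
  le_of_forall_gt_imp_ge_of_dense fun lam hlam =>
    have hlam0 : 0 < lam := (vLpNorm_nonneg g).trans_lt hlam
    vLpNorm_le hlam0 <| (vModular_mono hp0 hfg hlam0 le_rfl).trans <|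
      vModular_le_one_of_vLpNorm_lt hp0 hg hlam

theorem ofReal_div_mul_rpow_le {pl r x y lam : ℝ} (hpl : 0 < pl) (hr : pl ≤ r) (hx : 0 ≤ x)
    (hxy : x ≤ y) (hlam : 0 < lam) :
    ENNReal.ofReal ((x / (2 ^ (1 / pl) * lam)) ^ r) ≤ 2⁻¹ * ENNReal.ofReal ((y / lam) ^ r) := by
  have htwo : 2 ≤ ((2:ℝ) ^ (1 / pl)) ^ r := by
    rw [← Real.rpow_mul zero_le_two]
    conv_lhs => rw [← Real.rpow_one 2]
    gcongr
    · norm_num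
    · rw [one_div_mul_eq_div, le_div_iff₀ hpl, one_mul]; exact hr
  have hr0 : 0 ≤ r := hpl.le.trans hr
  have hreal : (x / (2 ^ (1 / pl) * lam)) ^ r ≤ 2⁻¹ * (y / lam) ^ r := by
    rw [mul_comm, ← div_div, Real.div_rpow (by positivity) (by positivity), div_le_iff₀
      (by positivity)]
    calc (x / lam) ^ r ≤ (y / lam) ^ r := by gcongr
      _ ≤ 2⁻¹ * (y / lam) ^ r * ((2:ℝ) ^ (1 / pl)) ^ r := by
        rw [mul_right_comm]; nlinarith [Real.rpow_nonneg (div_nonneg (hx.trans hxy) hlam.le) r]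
  calc _ ≤ ENNReal.ofReal (2⁻¹ * (y / lam) ^ r) := ENNReal.ofReal_le_ofReal hreal
    _ = _ := by rw [ENNReal.ofReal_mul (by norm_num), ENNReal.ofReal_inv_of_pos two_pos]; simp

theorem vModular_le_half_add {pl : ℝ} (hpl : 0 < pl) (hp : ∀ᵐ ω ∂μ, pl ≤ p ω)
    {A : Set Ω} (hA : MeasurableSet A) {h f g : Ω → ℝ} (hf : ∀ ω ∈ A, |h ω| ≤ |f ω|)
    (hg : ∀ ω ∈ Aᶜ, |h ω| ≤ |g ω|) {lam : ℝ} (hlam : 0 < lam) :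
    vModular μ p h (2 ^ (1 / pl) * lam) ≤ 2⁻¹ * (vModular μ p f lam + vModular μ p g lam) := by
  have half : ∀ (S : Set Ω) (k : Ω → ℝ), MeasurableSet S → (∀ ω ∈ S, |h ω| ≤ |k ω|) →
      ∫⁻ ω in S, ENNReal.ofReal ((|h ω| / (2 ^ (1 / pl) * lam)) ^ p ω) ∂μ
        ≤ 2⁻¹ * vModular μ p k lam := fun S k hS hk =>
    calc _ ≤ ∫⁻ ω in S, 2⁻¹ * ENNReal.ofReal ((|k ω| / lam) ^ p ω) ∂μ := by
          refine lintegral_mono_ae ?_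
          filter_upwards [ae_restrict_mem hS, ae_restrict_of_ae hp] with ω hωS hω
          exact ofReal_div_mul_rpow_le hpl hω (abs_nonneg _) (hk ω hωS) hlam
      _ ≤ 2⁻¹ * vModular μ p k lam := by
          rw [lintegral_const_mul' _ _ (by simp)]
          exact mul_le_mul_right (setLIntegral_le_lintegral _ _) _
  rw [vModular, ← lintegral_add_compl _ hA, mul_add]
  exact add_le_add (half A f hA hf) (half Aᶜ g hA.compl hg)

theorem vLpNorm_le_of_le_piecewise {pl : ℝ} (hpl : 0 < pl) (hp : ∀ᵐ ω ∂μ, pl ≤ p ω)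
    {A : Set Ω} (hA : MeasurableSet A) {h f g : Ω → ℝ} (hf : ∀ ω ∈ A, |h ω| ≤ |f ω|)
    (hg : ∀ ω ∈ Aᶜ, |h ω| ≤ |g ω|) (hfm : MemVLp μ p f) (hgm : MemVLp μ p g) :
    vLpNorm μ p h ≤ 2 ^ (1 / pl) * max (vLpNorm μ p f) (vLpNorm μ p g) := by
  have hp0 : ∀ᵐ ω ∂μ, 0 ≤ p ω := hp.mono fun _ hω => hpl.le.trans hω
  have hD : (0:ℝ) < 2 ^ (1 / pl) := by positivity
  rw [← div_le_iff₀' hD]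
  refine le_of_forall_gt_imp_ge_of_dense fun lam hlam => ?_
  have hlam0 : 0 < lam := ((vLpNorm_nonneg f).trans (le_max_left _ _)).trans_lt hlam
  rw [div_le_iff₀' hD]
  refine vLpNorm_le (by positivity) ((vModular_le_half_add hpl hp hA hf hg hlam0).trans ?_)
  calc 2⁻¹ * (vModular μ p f lam + vModular μ p g lam) ≤ 2⁻¹ * (1 + 1) := by
        gcongr
        · exact vModular_le_one_of_vLpNorm_lt hp0 hfm ((le_max_left _ _).trans_lt hlam)
        · exact vModular_le_one_of_vLpNorm_lt hp0 hgm ((le_max_right _ _).trans_lt hlam)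
    _ = 1 := by rw [one_add_one_eq_two, ENNReal.inv_mul_cancel two_ne_zero ofNat_ne_top]

end VariableLebesgue

theorem abs_indicator_one_le {α : Type*} {A B : Set α} {ω : α} (h : ω ∈ A → ω ∈ B) :
    |A.indicator (1 : α → ℝ) ω| ≤ |B.indicator 1 ω| := by
  by_cases hA : ω ∈ A
  · simp [hA, h hA]
  · simp [hA]

section CharacteristicFunctions

variable {μ : Measure Ω} {p : Ω → ℝ}

theorem vModular_indicator_one_le [IsZeroOrProbabilityMeasure μ] (A : Set Ω) :
    vModular μ p (A.indicator 1) 1 ≤ 1 := by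
  calc vModular μ p (A.indicator 1) 1 ≤ ∫⁻ _, 1 ∂μ := lintegral_mono fun ω => by
        rw [div_one, ENNReal.ofReal_le_one]
        by_cases hA : ω ∈ A
        · simp [hA]
        · simpa [hA] using Real.zero_rpow_le_one (p ω)
    _ ≤ 1 := by simpa using prob_le_one

theorem memVLp_indicator_one [IsZeroOrProbabilityMeasure μ] (A : Set Ω) :
    MemVLp μ p (A.indicator 1) :=
  ⟨1, one_pos, vModular_indicator_one_le A⟩

theorem chiNorm_le_one [IsZeroOrProbabilityMeasure μ] (A : Set Ω) : chiNorm μ p A ≤ 1 :=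
  vLpNorm_le one_pos (vModular_indicator_one_le A)

theorem chiNorm_mono [IsZeroOrProbabilityMeasure μ] (hp0 : ∀ᵐ ω ∂μ, 0 ≤ p ω) {A B : Set Ω}
    (hAB : A ⊆ B) : chiNorm μ p A ≤ chiNorm μ p B :=
  vLpNorm_mono hp0 (memVLp_indicator_one B) fun _ => abs_indicator_one_le (hAB ·)

theorem chiNorm_le_of_subset_union [IsZeroOrProbabilityMeasure μ] {pl : ℝ} (hpl : 0 < pl)
    (hp : ∀ᵐ ω ∂μ, pl ≤ p ω) {A B E : Set Ω} (hA : MeasurableSet A) (hE : E ⊆ A ∪ B) :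
    chiNorm μ p E ≤ 2 ^ (1 / pl) * max (chiNorm μ p A) (chiNorm μ p B) :=
  vLpNorm_le_of_le_piecewise hpl hp hA (fun _ hω => abs_indicator_one_le fun _ => hω)
    (fun _ hω => abs_indicator_one_le fun hE' => (hE hE').resolve_left hω)
    (memVLp_indicator_one A) (memVLp_indicator_one B)

end CharacteristicFunctions

def chiDistribution (μ : Measure Ω) (p : Ω → ℝ) (f : Ω → ℝ) (t : ℝ) : ℝ :=
  chiNorm μ p {ω | t < |f ω|}

section ChiDistribution

variable {μ : Measure Ω} [IsZeroOrProbabilityMeasure μ] {p : Ω → ℝ}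

theorem chiDistribution_mem_Icc (f : Ω → ℝ) (t : ℝ) : chiDistribution μ p f t ∈ Icc 0 1 :=
  ⟨vLpNorm_nonneg _, chiNorm_le_one _⟩

theorem chiDistribution_antitone (hp0 : ∀ᵐ ω ∂μ, 0 ≤ p ω) (f : Ω → ℝ) :
    Antitone (chiDistribution μ p f) :=
  fun _ _ hst => chiNorm_mono hp0 fun _ hω => hst.trans_lt hω

theorem chiDistribution_add_le {pl : ℝ} (hpl : 0 < pl) (hp : ∀ᵐ ω ∂μ, pl ≤ p ω)
    {f : Ω → ℝ} (hf : Measurable f) (g : Ω → ℝ) (t : ℝ) :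
    chiDistribution μ p (f + g) t ≤
      2 ^ (1 / pl) * max (chiDistribution μ p f (t / 2)) (chiDistribution μ p g (t / 2)) := by
  refine chiNorm_le_of_subset_union hpl hp (measurableSet_lt measurable_const hf.abs) ?_
  intro ω (hω : t < |f ω + g ω|)
  by_contra hmem
  simp only [mem_union, mem_ofPred_eq, not_or, not_lt] at hmem
  linarith [abs_add_le (f ω) (g ω)]

theorem measurable_mul_comp_chiDistribution (hp0 : ∀ᵐ ω ∂μ, 0 ≤ p ω) {ψ : ℝ → ℝ}
    (hψ : MonotoneOn ψ (Icc 0 1)) (f : Ω → ℝ) :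
    Measurable fun t => t * ψ (chiDistribution μ p f t) :=
  measurable_id.mul <| Antitone.measurable fun _ _ hst =>
    hψ (chiDistribution_mem_Icc f _) (chiDistribution_mem_Icc f _)
      (chiDistribution_antitone hp0 f hst)

theorem mul_gammaB_chiDistribution_add_le {b ψ : ℝ → ℝ} {pl : ℝ} (hpl : 0 < pl)
    (hp : ∀ᵐ ω ∂μ, pl ≤ p ω) (hψ0 : ∀ y ∈ Icc (0:ℝ) 1, 0 ≤ ψ y)
    (hψ : ∀ x ∈ Icc (0:ℝ) 1, ∀ y ∈ Icc (0:ℝ) 1, x ≤ 2 ^ (1 / pl) * y → x * gammaB b x ≤ ψ y)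
    {f : Ω → ℝ} (hf : Measurable f) (g : Ω → ℝ) {t : ℝ} (ht : 0 < t) :
    t * chiDistribution μ p (f + g) t * gammaB b (chiDistribution μ p (f + g) t) ≤
      2 * (t / 2 * ψ (chiDistribution μ p f (t / 2)) +
        t / 2 * ψ (chiDistribution μ p g (t / 2))) := by
  set a := chiDistribution μ p f (t / 2)
  set a' := chiDistribution μ p g (t / 2)
  have hmax : ψ (max a a') ≤ ψ a + ψ a' := by
    have := hψ0 a (chiDistribution_mem_Icc f _)
    have := hψ0 a' (chiDistribution_mem_Icc g _)
    rcases max_choice a a' with h | h <;> rw [h] <;> linarith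
  calc _ = t * (chiDistribution μ p (f + g) t * gammaB b (chiDistribution μ p (f + g) t)) :=
        mul_assoc _ _ _
    _ ≤ t * ψ (max a a') := by
        gcongr
        refine hψ _ (chiDistribution_mem_Icc _ _) _ ?_ (chiDistribution_add_le hpl hp hf g t)
        rcases max_choice a a' with h | h <;> rw [h] <;> exact chiDistribution_mem_Icc _ _
    _ ≤ t * (ψ a + ψ a') := by gcongr
    _ = _ := by ring

end ChiDistribution

/-- The norm of `L^q((0, ∞), dt / t)`, but with the pointwise (not essential) supremum at
`q = ∞`, as in `vLKNorm`. -/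
def haarLqNorm (q : ℝ≥0∞) (F : ℝ → ℝ) : ℝ≥0∞ :=
  if q = ∞ then ⨆ t ∈ Ioi (0:ℝ), ENNReal.ofReal (F t)
  else (∫⁻ t in Ioi (0:ℝ), ENNReal.ofReal (F t ^ q.toReal / t)) ^ (1 / q.toReal)

theorem vLKNorm_eq_haarLqNorm (μ : Measure Ω) (p : Ω → ℝ) (q : ℝ≥0∞) (b : ℝ → ℝ)
    (f : Ω → ℝ) : vLKNorm μ p q b f = haarLqNorm q
      (fun t => t * chiDistribution μ p f t * gammaB b (chiDistribution μ p f t)) :=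
  rfl

theorem setLIntegral_Ioi_comp_div (H : ℝ → ℝ≥0∞) {a : ℝ} (ha : 0 < a) :
    ∫⁻ t in Ioi 0, H (t / a) = ENNReal.ofReal a * ∫⁻ s in Ioi 0, H s := by
  have he : MeasurableEmbedding (a⁻¹ * ·) :=
    (Homeomorph.mulLeft₀ a⁻¹ (inv_ne_zero ha.ne')).measurableEmbedding
  have hpre : (a⁻¹ * ·) ⁻¹' Ioi (0:ℝ) = Ioi 0 := by
    ext t; simp [mul_pos_iff_of_pos_left (inv_pos.2 ha)]
  have := he.restrict_map volume (Ioi 0)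
  rw [Real.map_volume_mul_left (inv_ne_zero ha.ne'), hpre, Measure.restrict_smul, inv_inv,
    abs_of_pos ha] at this
  simp_rw [div_eq_inv_mul]
  rw [← he.lintegral_map, ← this, lintegral_smul_measure, smul_eq_mul]

section HaarLqNorm

variable {q : ℝ≥0∞}

theorem haarLqNorm_comp_div (F : ℝ → ℝ) {a : ℝ} (ha : 0 < a) :
    haarLqNorm q (fun t => F (t / a)) = haarLqNorm q F := by
  unfold haarLqNorm
  split_ifs
  · refine le_antisymm (iSup₂_le fun t ht => ?_) (iSup₂_le fun s hs => ?_)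
    · exact le_iSup₂_of_le (f := fun t (_ : t ∈ Ioi (0:ℝ)) => ENNReal.ofReal (F t)) (t / a)
        (div_pos ht ha) le_rfl
    · refine le_iSup₂_of_le (f := fun t (_ : t ∈ Ioi (0:ℝ)) => ENNReal.ofReal (F (t / a)))
        (s * a) (mul_pos hs ha) ?_
      simp [ha.ne']
  · congr 1
    have hscale : ∀ t ∈ Ioi (0:ℝ), ENNReal.ofReal (F (t / a) ^ q.toReal / t) =
        ENNReal.ofReal a⁻¹ * ENNReal.ofReal (F (t / a) ^ q.toReal / (t / a)) := fun t ht => by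
      rw [← ENNReal.ofReal_mul (by positivity)]
      congr 1
      field_simp
    rw [setLIntegral_congr_fun measurableSet_Ioi hscale, lintegral_const_mul' _ _ ofReal_ne_top,
      setLIntegral_Ioi_comp_div (fun s => ENNReal.ofReal (F s ^ q.toReal / s)) ha, ← mul_assoc,
      ← ENNReal.ofReal_mul (by positivity), inv_mul_cancel₀ ha.ne', ENNReal.ofReal_one, one_mul]

theorem haarLqNorm_le_ofReal_mul (hq : q ≠ 0) {F G : ℝ → ℝ} {c : ℝ} (hc : 0 ≤ c)
    (hF : ∀ t > 0, 0 ≤ F t) (hG : ∀ t > 0, 0 ≤ G t) (hFG : ∀ t > 0, F t ≤ c * G t) :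
    haarLqNorm q F ≤ ENNReal.ofReal c * haarLqNorm q G := by
  unfold haarLqNorm
  split_ifs with hqtop
  · rw [ENNReal.mul_iSup]
    refine iSup₂_le fun t ht => le_iSup_of_le t <| ?_
    rw [ENNReal.mul_iSup]
    refine le_iSup_of_le ht ?_
    rw [← ENNReal.ofReal_mul hc]
    exact ENNReal.ofReal_le_ofReal (hFG t ht)
  · have hr : 0 < q.toReal := ENNReal.toReal_pos hq hqtop
    calc _ ≤ (∫⁻ t in Ioi (0:ℝ), ENNReal.ofReal (c ^ q.toReal) *
          ENNReal.ofReal (G t ^ q.toReal / t)) ^ (1 / q.toReal) := by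
          gcongr ?_ ^ _
          refine setLIntegral_mono' measurableSet_Ioi fun t (ht : 0 < t) => ?_
          rw [← ENNReal.ofReal_mul (by positivity), mul_div_assoc', ← Real.mul_rpow hc (hG t ht)]
          gcongr
          exacts [hF t ht, hFG t ht]
      _ = _ := by
          rw [lintegral_const_mul' _ _ ofReal_ne_top,
            ENNReal.mul_rpow_of_nonneg _ _ (by positivity),
            ENNReal.ofReal_rpow_of_nonneg (by positivity) (by positivity),
            ← Real.rpow_mul hc, mul_one_div_cancel hr.ne', Real.rpow_one]

theorem haarLqNorm_add_le (hq : q ≠ 0) {F G : ℝ → ℝ} (hFm : Measurable F)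
    (hF : ∀ t > 0, 0 ≤ F t) (hG : ∀ t > 0, 0 ≤ G t) :
    haarLqNorm q (F + G) ≤
      ENNReal.ofReal (2 * 2 ^ (1 / q.toReal)) * (haarLqNorm q F + haarLqNorm q G) := by
  rw [ENNReal.ofReal_mul zero_le_two, ← ENNReal.ofReal_rpow_of_pos two_pos, ENNReal.ofReal_ofNat]
  unfold haarLqNorm
  split_ifs with hqtop
  · rw [hqtop, ENNReal.toReal_top, _root_.div_zero, ENNReal.rpow_zero, mul_one]
    refine le_trans (iSup₂_le fun t ht => ?_) (le_mul_of_one_le_left' one_le_two)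
    calc ENNReal.ofReal (F t + G t) ≤ ENNReal.ofReal (F t) + ENNReal.ofReal (G t) :=
          ENNReal.ofReal_add_le
      _ ≤ _ := add_le_add (le_iSup₂_of_le t ht le_rfl) (le_iSup₂_of_le t ht le_rfl)
  · set r := q.toReal
    have hr : 0 < r := ENNReal.toReal_pos hq hqtop
    have hpt : ∀ t ∈ Ioi (0:ℝ), ENNReal.ofReal ((F + G) t ^ r / t) ≤
        2 ^ r * (ENNReal.ofReal (F t ^ r / t) + ENNReal.ofReal (G t ^ r / t)) := fun t ht => by
      have ht : 0 < t := ht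
      simp only [Pi.add_apply, ENNReal.ofReal_div_of_pos ht,
        ← ENNReal.ofReal_rpow_of_nonneg (add_nonneg (hF t ht) (hG t ht)) hr.le,
        ← ENNReal.ofReal_rpow_of_nonneg (hF t ht) hr.le,
        ← ENNReal.ofReal_rpow_of_nonneg (hG t ht) hr.le,
        ENNReal.ofReal_add (hF t ht) (hG t ht), ← ENNReal.add_div, ← mul_div_assoc]
      gcongr
      exact add_rpow_le_two_rpow_mul_rpow_add_rpow _ _ hr.le
    have hFm' : Measurable fun t => ENNReal.ofReal (F t ^ r / t) := by fun_prop
    calc _ ≤ (2 ^ r * ((∫⁻ t in Ioi (0:ℝ), ENNReal.ofReal (F t ^ r / t)) +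
          ∫⁻ t in Ioi (0:ℝ), ENNReal.ofReal (G t ^ r / t))) ^ (1 / r) := by
          rw [← lintegral_add_left hFm', ← lintegral_const_mul' _ _ (by simp)]
          gcongr ?_ ^ _
          exact setLIntegral_mono' measurableSet_Ioi hpt
      _ = 2 * ((∫⁻ t in Ioi (0:ℝ), ENNReal.ofReal (F t ^ r / t)) +
          ∫⁻ t in Ioi (0:ℝ), ENNReal.ofReal (G t ^ r / t)) ^ (1 / r) := by
          rw [ENNReal.mul_rpow_of_nonneg _ _ (by positivity), ← ENNReal.rpow_mul,
            mul_one_div_cancel hr.ne', ENNReal.rpow_one]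
      _ ≤ _ := by
          rw [mul_assoc]
          gcongr
          exact add_rpow_le_two_rpow_mul_rpow_add_rpow _ _ (by positivity)

end HaarLqNorm

theorem haarLqNorm_le_of_le_add_comp_div {q : ℝ≥0∞} (hq : q ≠ 0) {F F₁ F₂ G₁ G₂ : ℝ → ℝ}
    {a c : ℝ} (ha : 0 ≤ a) (hc : 0 < c) (hG₁m : Measurable G₁) (hG₁ : ∀ t > 0, 0 ≤ G₁ t)
    (hG₂ : ∀ t > 0, 0 ≤ G₂ t) (hF : ∀ t > 0, 0 ≤ F t)
    (hFG : ∀ t > 0, F t ≤ a * (G₁ (t / 2) + G₂ (t / 2)))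
    (hGF₁ : ∀ t > 0, c * G₁ t ≤ F₁ t) (hGF₂ : ∀ t > 0, c * G₂ t ≤ F₂ t) :
    haarLqNorm q F ≤ ENNReal.ofReal (a * (2 * 2 ^ (1 / q.toReal)) * c⁻¹) *
      (haarLqNorm q F₁ + haarLqNorm q F₂) := by
  have hG₁F₁ (t) (ht : t > 0) : G₁ t ≤ c⁻¹ * F₁ t := (le_inv_mul_iff₀ hc).2 (hGF₁ t ht)
  have hG₂F₂ (t) (ht : t > 0) : G₂ t ≤ c⁻¹ * F₂ t := (le_inv_mul_iff₀ hc).2 (hGF₂ t ht)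
  have hF₁ (t) (ht : t > 0) : 0 ≤ F₁ t := (mul_nonneg hc.le (hG₁ t ht)).trans (hGF₁ t ht)
  have hF₂ (t) (ht : t > 0) : 0 ≤ F₂ t := (mul_nonneg hc.le (hG₂ t ht)).trans (hGF₂ t ht)
  calc haarLqNorm q F
      ≤ ENNReal.ofReal a * haarLqNorm q (fun t => G₁ (t / 2) + G₂ (t / 2)) :=
        haarLqNorm_le_ofReal_mul hq ha hF
          (fun t ht => add_nonneg (hG₁ _ (half_pos ht)) (hG₂ _ (half_pos ht))) hFG
    _ ≤ ENNReal.ofReal a * (ENNReal.ofReal (2 * 2 ^ (1 / q.toReal)) *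
          (haarLqNorm q (fun t => G₁ (t / 2)) + haarLqNorm q (fun t => G₂ (t / 2)))) := by
        gcongr
        exact haarLqNorm_add_le hq (hG₁m.comp (measurable_id.div_const 2))
          (fun t ht => hG₁ _ (half_pos ht)) (fun t ht => hG₂ _ (half_pos ht))
    _ ≤ ENNReal.ofReal a * (ENNReal.ofReal (2 * 2 ^ (1 / q.toReal)) *
          (ENNReal.ofReal c⁻¹ * haarLqNorm q F₁ + ENNReal.ofReal c⁻¹ * haarLqNorm q F₂)) := by
        rw [haarLqNorm_comp_div G₁ two_pos, haarLqNorm_comp_div G₂ two_pos]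
        gcongr
        · exact haarLqNorm_le_ofReal_mul hq (by positivity) hG₁ hF₁ hG₁F₁
        · exact haarLqNorm_le_ofReal_mul hq (by positivity) hG₂ hF₂ hG₂F₂
    _ = _ := by
        rw [← mul_add, ENNReal.ofReal_mul (q := c⁻¹) (by positivity),
          ENNReal.ofReal_mul (q := 2 * 2 ^ (1 / q.toReal)) ha]
        ring

theorem vLKNorm_add_le_general (μ : Measure Ω) [IsProbabilityMeasure μ]
    (p : Ω → ℝ) (pl pu : ℝ) (hpl : 0 < pl)
    (hp : ∀ᵐ ω ∂μ, pl ≤ p ω ∧ p ω ≤ pu)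
    (q : ℝ≥0∞) (hq : 0 < q) (b : ℝ → ℝ) (hb : SlowlyVarying b) :
    ∃ C > (0:ℝ), ∀ f g : Ω → ℝ, Measurable f → Measurable g →
      vLKNorm μ p q b (f + g) ≤
        ENNReal.ofReal C * (vLKNorm μ p q b f + vLKNorm μ p q b g) := by
  have hpl' : ∀ᵐ ω ∂μ, pl ≤ p ω := hp.mono fun _ h => h.1
  have hp0 : ∀ᵐ ω ∂μ, 0 ≤ p ω := hpl'.mono fun _ h => hpl.le.trans h
  obtain ⟨ψ, hψmono, hψ0, c, hc, hψ⟩ := hb.exists_monotoneOn_majorant (2 ^ (1 / pl))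
  have hW0 (f : Ω → ℝ) (t : ℝ) (ht : t > 0) : 0 ≤ t * ψ (chiDistribution μ p f t) :=
    mul_nonneg ht.le (hψ0 _ (chiDistribution_mem_Icc f t))
  have hWw (f : Ω → ℝ) (t : ℝ) (ht : t > 0) : c * (t * ψ (chiDistribution μ p f t)) ≤
      t * chiDistribution μ p f t * gammaB b (chiDistribution μ p f t) := by
    rw [mul_left_comm, mul_assoc]
    exact mul_le_mul_of_nonneg_left (hψ _ (chiDistribution_mem_Icc f t)).1 ht.le
  refine ⟨2 * (2 * 2 ^ (1 / q.toReal)) * c⁻¹, by positivity, fun f g hf _ => ?_⟩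
  simp only [vLKNorm_eq_haarLqNorm]
  exact haarLqNorm_le_of_le_add_comp_div hq.ne' zero_le_two hc
    (measurable_mul_comp_chiDistribution hp0 hψmono f) (hW0 f) (hW0 g)
    (fun t ht => (mul_nonneg hc.le (hW0 _ t ht)).trans (hWw _ t ht))
    (fun t ht => mul_gammaB_chiDistribution_add_le hpl hpl' hψ0 (fun x hx => (hψ x hx).2) hf g ht)
    (hWw f) (hWw g)

/-- Quasi-triangle inequality for variable Lorentz–Karamata quasi-norms. -/
theorem vLKNorm_add_le (μ : Measure Ω) [IsProbabilityMeasure μ]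
    (p : Ω → ℝ) (pl pu : ℝ) (hpl : 0 < pl) (hple : pl ≤ pu)
    (hp : ∀ᵐ ω ∂μ, pl ≤ p ω ∧ p ω ≤ pu)
    (q : ℝ≥0∞) (hq : 0 < q) (b : ℝ → ℝ) (hb : SlowlyVarying b) :
    ∃ C > (0:ℝ), ∀ f g : Ω → ℝ, Measurable f → Measurable g →
      vLKNorm μ p q b (f + g) ≤
        ENNReal.ofReal C * (vLKNorm μ p q b f + vLKNorm μ p q b g) :=
  vLKNorm_add_le_general μ p pl pu hpl hp q hq b hb
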